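/- (Transfer principle) Let f and g be noncommutative polynomials in ℕ⟨x₁,…,x_m⟩ (the monoid semiring of the free monoid on x₁,…,x_m over ℕ) with disjoint supports (no monomial occurs in both f and g). If f − g is a polynomial identity of the matrix ring Mₙ(ℤ), i.e., f(A₁,…,A_m) = g(A₁,…,A_m) for all A₁,…,A_m ∈ Mₙ(ℤ), then f(A₁,…,A_m) = g(A₁,…,A_m) for all A₁,…,A_m ∈ Mₙ(R), for every commutative semiring R. -/

import Mathlib

/-!
Both sides are ℕ-polynomial expressions, so it suffices to compare them on the generic matrices
`(X_{k,i,j})` over `ℕ[X]`, which specialise to any tuple of matrices over any commutative semiring.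
Over `ℤ` the hypothesis forces the two sides to agree as polynomials, since `ℤ` is an infinite
domain; and `ℕ[X] → ℤ[X]` is injective.
-/

noncomputable section

/-- Evaluation of a polynomial of the free ℕ-semiring `ℕ⟨x₁,…,x_m⟩` (the monoid
semiring of the free monoid on m letters over ℕ) at an m-tuple of elements of a
semiring `S`. -/
def evalNC {m : ℕ} {S : Type*} [Semiring S]
    (f : MonoidAlgebra ℕ (FreeMonoid (Fin m))) (A : Fin m → S) : S :=
  MonoidAlgebra.lift ℕ S (FreeMonoid (Fin m)) (FreeMonoid.lift A) f

open MvPolynomial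

variable {m n : ℕ}

theorem evalNC_map {S T : Type*} [Semiring S] [Semiring T] (φ : S →+* T)
    (f : MonoidAlgebra ℕ (FreeMonoid (Fin m))) (A : Fin m → S) :
    φ (evalNC f A) = evalNC f (fun k => φ (A k)) := by
  have hcomp : φ.toMonoidHom.comp (FreeMonoid.lift A) = FreeMonoid.lift fun k => φ (A k) :=
    FreeMonoid.hom_eq fun _ => rfl
  unfold evalNC
  rw [MonoidAlgebra.lift_apply, MonoidAlgebra.lift_apply, map_finsuppSum]
  refine Finsupp.sum_congr fun w _ => ?_
  rw [map_nsmul, ← DFunLike.congr_fun hcomp w]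
  rfl

theorem evalNC_eq_of_map_eq {S T : Type*} [Semiring S] [Semiring T] {φ : S →+* T}
    (hφ : Function.Injective φ) {f g : MonoidAlgebra ℕ (FreeMonoid (Fin m))} {A : Fin m → S}
    (h : evalNC f (fun k => φ (A k)) = evalNC g (fun k => φ (A k))) :
    evalNC f A = evalNC g A :=
  hφ (by rw [evalNC_map, evalNC_map, h])

def genericMatrices (m n : ℕ) (R : Type*) [CommSemiring R] :
    Fin m → Matrix (Fin n) (Fin n) (MvPolynomial (Fin m × Fin n × Fin n) R) :=
  fun k => Matrix.of fun i j => X (k, i, j)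

section Generic

variable {R S : Type*} [CommSemiring R] [CommSemiring S]

theorem eval₂Hom_mapMatrix_genericMatrices (φ : R →+* S) (x : Fin m × Fin n × Fin n → S)
    (k : Fin m) :
    (eval₂Hom φ x).mapMatrix (genericMatrices m n R k) = Matrix.of fun i j => x (k, i, j) := by
  ext i j
  simp [genericMatrices]

theorem map_mapMatrix_genericMatrices (φ : R →+* S) (k : Fin m) :
    (map φ).mapMatrix (genericMatrices m n R k) = genericMatrices m n S k := by
  ext i j
  simp [genericMatrices]

theorem evalNC_map_genericMatrices (φ : R →+* S) (x : Fin m × Fin n × Fin n → S)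
    (f : MonoidAlgebra ℕ (FreeMonoid (Fin m))) :
    (eval₂Hom φ x).mapMatrix (evalNC f (genericMatrices m n R))
      = evalNC f fun k => Matrix.of fun i j => x (k, i, j) := by
  simp only [evalNC_map, eval₂Hom_mapMatrix_genericMatrices]

theorem evalNC_eq_of_genericMatrices {f g : MonoidAlgebra ℕ (FreeMonoid (Fin m))}
    (h : evalNC f (genericMatrices m n R) = evalNC g (genericMatrices m n R))
    (φ : R →+* S) (A : Fin m → Matrix (Fin n) (Fin n) S) :
    evalNC f A = evalNC g A := by
  have hx := congrArg (eval₂Hom φ fun s => A s.1 s.2.1 s.2.2).mapMatrix h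
  rwa [evalNC_map_genericMatrices, evalNC_map_genericMatrices] at hx

theorem evalNC_genericMatrices_eq_of_injective {f g : MonoidAlgebra ℕ (FreeMonoid (Fin m))}
    {φ : R →+* S} (hφ : Function.Injective φ)
    (h : evalNC f (genericMatrices m n S) = evalNC g (genericMatrices m n S)) :
    evalNC f (genericMatrices m n R) = evalNC g (genericMatrices m n R) := by
  refine evalNC_eq_of_map_eq (φ := (MvPolynomial.map φ).mapMatrix)
    (Matrix.map_injective (map_injective φ hφ)) ?_
  simpa only [map_mapMatrix_genericMatrices] using h

end Generic

theorem evalNC_genericMatrices_eq {R : Type*} [CommRing R] [IsDomain R] [Infinite R]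
    {f g : MonoidAlgebra ℕ (FreeMonoid (Fin m))}
    (h : ∀ A : Fin m → Matrix (Fin n) (Fin n) R, evalNC f A = evalNC g A) :
    evalNC f (genericMatrices m n R) = evalNC g (genericMatrices m n R) := by
  refine Matrix.ext fun i j => MvPolynomial.funext (R := R) fun x => ?_
  have hx : (eval₂Hom (RingHom.id R) x).mapMatrix (evalNC f (genericMatrices m n R))
      = (eval₂Hom (RingHom.id R) x).mapMatrix (evalNC g (genericMatrices m n R)) := by
    rw [evalNC_map_genericMatrices, evalNC_map_genericMatrices, h]
  exact congrFun (congrFun hx i) j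

theorem transfer_principle_general (m n : ℕ) (f g : MonoidAlgebra ℕ (FreeMonoid (Fin m)))
    (hZ : ∀ A : Fin m → Matrix (Fin n) (Fin n) ℤ, evalNC f A = evalNC g A) :
    ∀ (R : Type*) [CommSemiring R] (A : Fin m → Matrix (Fin n) (Fin n) R),
      evalNC f A = evalNC g A := by
  intro R _ A
  have hℕ : evalNC f (genericMatrices m n ℕ) = evalNC g (genericMatrices m n ℕ) :=
    evalNC_genericMatrices_eq_of_injective (φ := Nat.castRingHom ℤ) Nat.cast_injective
      (evalNC_genericMatrices_eq hZ)
  exact evalNC_eq_of_genericMatrices hℕ (Nat.castRingHom R) A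

/-- STATEMENT 18 (Transfer principle): if `f, g ∈ ℕ⟨x₁,…,x_m⟩` have disjoint supports
and `f − g` is a polynomial identity of `Mₙ(ℤ)` (i.e. `f` and `g` agree on all
m-tuples of n×n integer matrices), then `f` and `g` agree on all m-tuples of n×n
matrices over every commutative semiring `R`. -/
theorem transfer_principle (m n : ℕ) (f g : MonoidAlgebra ℕ (FreeMonoid (Fin m)))
    (hdisj : Disjoint f.coeff.support g.coeff.support)
    (hZ : ∀ A : Fin m → Matrix (Fin n) (Fin n) ℤ, evalNC f A = evalNC g A) :
    ∀ (R : Type*) [CommSemiring R] (A : Fin m → Matrix (Fin n) (Fin n) R),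
      evalNC f A = evalNC g A :=
  transfer_principle_general m n f g hZ
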